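/- arXiv:2310.05775 — 4 statements merged into one kernel-verified Lean document; each statement's English description precedes it below -/
import Mathlib

section
/- Let v ∈ ℝ^n be a vector having at least S magnitudes, i.e., there exist S nonzero entries of v with pairwise distinct magnitudes (where the magnitude of a nonzero real x is the integer j with 10^j ≤ |x| < 10^{j+1}). Let p ∈ [1/3, 2/3]^n and let w ∈ {±1}^n be a random vector with independent entries where w_i = 1 with probability p_i and w_i = -1 with probability 1 - p_i. Then for any α ∈ ℝ, the probability that ⟨v, w⟩ = α is at most (2/3)^{⌈S/2⌉}. -/
/-!
Among the `S` distinct magnitudes keep every other one: this leaves `⌈S/2⌉` coordinates whose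
magnitudes differ pairwise by at least two. On such coordinates the term of largest magnitude
outweighs all the others together, so once the signs outside them are fixed, at most one choice
of the remaining signs gives `⟨v, w⟩ = α`. Each single choice has probability at most
`(2/3)^⌈S/2⌉` times the probability of the outside signs, and the latter add up to `1`.
-/

/-- The magnitude of a nonzero real `x`: the unique integer `j` with `10^j ≤ |x| < 10^(j+1)`. -/
noncomputable def mag (x : ℝ) : ℤ := ⌊Real.logb 10 |x|⌋

lemma mag_eq_intLog (x : ℝ) : mag x = Int.log 10 |x| := by
  rw [mag]; exact_mod_cast Real.floor_logb_natCast (b := 10) (abs_nonneg x)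

lemma zpow_mag_le_abs {x : ℝ} (hx : x ≠ 0) : (10 : ℝ) ^ mag x ≤ |x| := by
  simpa [mag_eq_intLog] using Int.zpow_log_le_self (b := 10) (by norm_num) (abs_pos.2 hx)

lemma abs_lt_zpow_mag_add_one (x : ℝ) : |x| < (10 : ℝ) ^ (mag x + 1) := by
  simpa [mag_eq_intLog] using Int.lt_zpow_succ_log_self (b := 10) (by norm_num) |x|

section
variable {ι : Type*} [DecidableEq ι] {v : ι → ℝ}

theorem sum_abs_lt_of_mag_le_of_pairwise {F : Finset ι}
    (hsep : (F : Set ι).Pairwise fun i j => 2 ≤ |mag (v i) - mag (v j)|)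
    {M : ℤ} (hM : ∀ i ∈ F, mag (v i) ≤ M) :
    ∑ i ∈ F, |v i| < 2 * 10 ^ (M + 1) := by
  induction F using Finset.strongInduction generalizing M with
  | H F ih =>
  rcases F.eq_empty_or_nonempty with rfl | hne
  · simp only [Finset.sum_empty]; positivity
  obtain ⟨i₀, hi₀, hmax⟩ := F.exists_max_image (fun i => mag (v i)) hne
  have hrest : ∑ i ∈ F.erase i₀, |v i| < 2 * 10 ^ (M - 2 + 1) := by
    refine ih _ (F.erase_ssubset hi₀) (hsep.mono (by simp)) fun i hi => ?_
    have hi' := Finset.mem_of_mem_erase hi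
    have hgap := hsep hi' hi₀ (Finset.ne_of_mem_erase hi)
    have := hmax i hi'
    have := hM i₀ hi₀
    rcases le_abs.1 hgap with h | h <;> omega
  have htop : |v i₀| < 10 ^ (M + 1) := (abs_lt_zpow_mag_add_one _).trans_le
    (zpow_le_zpow_right₀ (by norm_num) (by linarith [hM i₀ hi₀]))
  rw [← Finset.sum_erase_add F _ hi₀]
  have : (10 : ℝ) ^ (M + 1) = 100 * 10 ^ (M - 2 + 1) := by
    rw [show M + 1 = 2 + (M - 2 + 1) by ring, zpow_add₀ (by norm_num)]; norm_num
  have : (0 : ℝ) < 10 ^ (M - 2 + 1) := by positivity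
  linarith

theorem sum_mul_ne_zero_of_pairwise {D : Finset ι} (hD : D.Nonempty) (h0 : ∀ i ∈ D, v i ≠ 0)
    (hsep : (D : Set ι).Pairwise fun i j => 2 ≤ |mag (v i) - mag (v j)|)
    {ε : ι → ℝ} (hε : ∀ i ∈ D, |ε i| = 1) :
    ∑ i ∈ D, ε i * v i ≠ 0 := by
  obtain ⟨i₀, hi₀, hmax⟩ := D.exists_max_image (fun i => mag (v i)) hD
  have hrest : ∑ i ∈ D.erase i₀, |v i| < |v i₀| := by
    refine (sum_abs_lt_of_mag_le_of_pairwise (hsep.mono (by simp)) (M := mag (v i₀) - 2)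
      fun i hi => ?_).trans_le ?_
    · have hi' := Finset.mem_of_mem_erase hi
      have hgap := hsep hi' hi₀ (Finset.ne_of_mem_erase hi)
      have := hmax i hi'
      rcases le_abs.1 hgap with h | h <;> omega
    · refine le_trans ?_ (zpow_mag_le_abs (h0 i₀ hi₀))
      have : (0 : ℝ) < 10 ^ mag (v i₀) := by positivity
      rw [show mag (v i₀) - 2 + 1 = mag (v i₀) - 1 by ring, zpow_sub_one₀ (by norm_num)]
      linarith
  intro hsum
  rw [← Finset.sum_erase_add _ _ hi₀, add_eq_zero_iff_eq_neg] at hsum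
  have : |ε i₀ * v i₀| ≤ ∑ i ∈ D.erase i₀, |ε i * v i| := by
    rw [← abs_neg, ← hsum]; exact Finset.abs_sum_le_sum_abs _ _
  simp only [abs_mul, hε i₀ hi₀, one_mul] at this
  rw [Finset.sum_congr rfl fun i hi => by rw [hε i (Finset.mem_of_mem_erase hi), one_mul]] at this
  linarith

theorem eq_of_sum_mul_sign_eq [Fintype ι] {U : Finset ι} (h0 : ∀ i ∈ U, v i ≠ 0)
    (hsep : (U : Set ι).Pairwise fun i j => 2 ≤ |mag (v i) - mag (v j)|)
    {σ τ : ι → Bool} (hout : ∀ i ∉ U, σ i = τ i)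
    (h : ∑ i, v i * (if σ i then 1 else -1) = ∑ i, v i * (if τ i then 1 else -1)) :
    σ = τ := by
  by_contra hne
  set D := Finset.univ.filter fun i => σ i ≠ τ i
  have hDU : D ⊆ U := fun i hi => by
    by_contra hiU
    exact (Finset.mem_filter.1 hi).2 (hout i hiU)
  have hdiff : ∑ i, v i * (if σ i then 1 else -1) - ∑ i, v i * (if τ i then 1 else -1)
      = 2 * ∑ i ∈ D, (if σ i then 1 else -1) * v i := by
    rw [← Finset.sum_sub_distrib, Finset.sum_filter, Finset.mul_sum]
    refine Finset.sum_congr rfl fun i _ => ?_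
    cases σ i <;> cases τ i <;> norm_num <;> ring
  refine sum_mul_ne_zero_of_pairwise (ε := fun i => if σ i then 1 else -1) ?_
    (fun i hi => h0 i (hDU hi)) (hsep.mono hDU) (fun i _ => by split_ifs <;> norm_num) ?_
  · obtain ⟨i, hi⟩ := Function.ne_iff.1 hne
    exact ⟨i, by simpa [D] using hi⟩
  · linarith

end

theorem Finset.exists_subset_pairwise_two_le_abs_sub (s : Finset ℤ) :
    ∃ t ⊆ s, s.card ≤ 2 * t.card ∧ (t : Set ℤ).Pairwise fun a b => 2 ≤ |a - b| := by
  induction s using Finset.strongInduction with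
  | H s ih =>
  rcases s.eq_empty_or_nonempty with rfl | hne
  · exact ⟨∅, subset_rfl, by simp, by simp⟩
  set m := s.max' hne
  set s' := s.filter fun a => a + 2 ≤ m
  have hm : m ∈ s := s.max'_mem hne
  have hs' : s' ⊂ s := Finset.filter_ssubset.2 ⟨m, hm, by omega⟩
  obtain ⟨t, hts', hcard, hsep⟩ := ih s' hs'
  have hmt : m ∉ t := fun h => by have := (Finset.mem_filter.1 (hts' h)).2; omega
  refine ⟨insert m t, Finset.insert_subset hm (hts'.trans hs'.subset), ?_, ?_⟩
  · have hcover : s ⊆ s' ∪ {m - 1, m} := fun a ha => by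
      have := s.le_max' a ha
      by_cases h : a + 2 ≤ m
      · exact Finset.mem_union_left _ (Finset.mem_filter.2 ⟨ha, h⟩)
      · exact Finset.mem_union_right _ (by simp; omega)
    have := (Finset.card_le_card hcover).trans (Finset.card_union_le _ _)
    have := Finset.card_le_two (a := m - 1) (b := m)
    rw [Finset.card_insert_of_notMem hmt]
    omega
  · rw [Finset.coe_insert]
    refine hsep.insert fun a ha _ => ?_
    have := (Finset.mem_filter.1 (hts' ha)).2
    constructor <;> rw [le_abs] <;> omega

theorem exists_subset_pairwise_two_le_abs_sub_of_injOn {ι : Type*} [DecidableEq ι] (f : ι → ℤ)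
    {T : Finset ι} (hf : Set.InjOn f T) :
    ∃ U ⊆ T, T.card ≤ 2 * U.card ∧ (U : Set ι).Pairwise fun i j => 2 ≤ |f i - f j| := by
  obtain ⟨t, htT, hcard, hsep⟩ := (T.image f).exists_subset_pairwise_two_le_abs_sub
  obtain ⟨U, hUT, rfl⟩ := Finset.subset_image_iff.1 htT
  refine ⟨U, hUT, ?_, fun i hi j hj hij => ?_⟩
  · rwa [Finset.card_image_of_injOn hf, Finset.card_image_of_injOn (hf.mono hUT)] at hcard
  · exact hsep (Finset.mem_image_of_mem f hi) (Finset.mem_image_of_mem f hj)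
      fun h => hij (hf (hUT hi) (hUT hj) h)

theorem sum_piFinset_prod_ite_mem_one_eq_one {ι : Type*} [Fintype ι] [DecidableEq ι]
    (q : ι → Bool → ℝ) (hq1 : ∀ i, q i true + q i false = 1) (U : Finset ι) :
    ∑ ρ ∈ Fintype.piFinset (fun i => if i ∈ U then {true} else Finset.univ),
      ∏ i, (if i ∈ U then 1 else q i (ρ i)) = 1 := by
  rw [← Finset.prod_univ_sum (f := fun i b => if i ∈ U then 1 else q i b)]
  refine Finset.prod_eq_one fun i _ => ?_
  split_ifs <;> simp [*]

theorem sum_prod_le_pow_card_of_eqOn_compl_imp_eq {ι : Type*} [Fintype ι] [DecidableEq ι]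
    (q : ι → Bool → ℝ) (hq0 : ∀ i b, 0 ≤ q i b) (hq1 : ∀ i, q i true + q i false = 1)
    {U : Finset ι} {c : ℝ} (hc : ∀ i ∈ U, ∀ b, q i b ≤ c) {A : Finset (ι → Bool)}
    (hA : ∀ σ ∈ A, ∀ τ ∈ A, (∀ i ∉ U, σ i = τ i) → σ = τ) :
    ∑ σ ∈ A, ∏ i, q i (σ i) ≤ c ^ U.card := by
  -- `G ρ` is the weight of `ρ` outside `U`, and `reset` forgets the coordinates in `U`.
  set G : (ι → Bool) → ℝ := fun ρ => ∏ i, if i ∈ U then 1 else q i (ρ i)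
  set reset : (ι → Bool) → ι → Bool := fun σ i => if i ∈ U then true else σ i
  have hG0 : ∀ ρ, 0 ≤ G ρ := fun ρ => Finset.prod_nonneg fun i _ => by
    split_ifs <;> simp [hq0]
  have hsplit : ∀ σ, ∏ i, q i (σ i) ≤ c ^ U.card * G (reset σ) := fun σ => by
    have hmul : ∏ i, q i (σ i) = (∏ i ∈ U, q i (σ i)) * G (reset σ) := by
      rw [← Finset.univ_inter U, ← Finset.prod_ite_mem, ← Finset.prod_mul_distrib]
      refine Finset.prod_congr rfl fun i _ => ?_
      by_cases hi : i ∈ U <;> simp [reset, hi]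
    rw [hmul]
    refine mul_le_mul_of_nonneg_right ?_ (hG0 _)
    calc ∏ i ∈ U, q i (σ i) ≤ ∏ _i ∈ U, c :=
          Finset.prod_le_prod (fun i _ => hq0 i _) fun i hi => hc i hi _
      _ = c ^ U.card := Finset.prod_const c
  have hinj : Set.InjOn reset A := fun σ hσ τ hτ h =>
    hA σ hσ τ hτ fun i hi => by simpa [reset, hi] using congrFun h i
  set R := Fintype.piFinset fun i => if i ∈ U then {true} else Finset.univ
  have himage : A.image reset ⊆ R := by
    intro ρ hρ
    obtain ⟨σ, -, rfl⟩ := Finset.mem_image.1 hρ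
    simp only [R, Fintype.mem_piFinset]
    intro i; split_ifs <;> simp [reset, *]
  calc ∑ σ ∈ A, ∏ i, q i (σ i) ≤ ∑ σ ∈ A, c ^ U.card * G (reset σ) :=
        Finset.sum_le_sum fun σ _ => hsplit σ
    _ = c ^ U.card * ∑ ρ ∈ A.image reset, G ρ := by rw [Finset.sum_image hinj, Finset.mul_sum]
    _ ≤ c ^ U.card * 1 := by
        gcongr
        · rcases U.eq_empty_or_nonempty with rfl | ⟨i, hi⟩
          · simp
          · exact pow_nonneg ((hq0 i true).trans (hc i hi true)) _
        · rw [← sum_piFinset_prod_ite_mem_one_eq_one q hq1 U]; exact Finset.sum_le_sum_of_subset_of_nonneg himage fun ρ _ _ => hG0 ρ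
    _ = c ^ U.card := mul_one _

theorem stmt_2_general (n S : ℕ) (v : Fin n → ℝ)
    (hmag : ∃ T : Finset (Fin n), T.card = S ∧ (∀ i ∈ T, v i ≠ 0) ∧
      Set.InjOn (fun i => mag (v i)) (T : Set (Fin n)))
    (p : Fin n → ℝ) (hp : ∀ i, 1/3 ≤ p i ∧ p i ≤ 2/3) (α : ℝ) :
    ∑ σ : Fin n → Bool,
      (if (∑ i, v i * (if σ i then 1 else -1)) = α then
        ∏ i, (if σ i then p i else 1 - p i) else 0)
      ≤ (2/3 : ℝ) ^ ⌈(S : ℝ)/2⌉₊ := by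
  obtain ⟨T, rfl, hT0, hTinj⟩ := hmag
  obtain ⟨U, hUT, hcard, hsep⟩ :=
    exists_subset_pairwise_two_le_abs_sub_of_injOn (fun i => mag (v i)) hTinj
  have hq0 : ∀ i (b : Bool), 0 ≤ if b then p i else 1 - p i := fun i b => by
    cases b <;> simp <;> linarith [hp i]
  have hq_le : ∀ i ∈ U, ∀ b : Bool, (if b then p i else 1 - p i) ≤ 2/3 := fun i _ b => by
    cases b <;> simp <;> linarith [hp i]
  rw [← Finset.sum_filter]
  calc _ ≤ (2/3 : ℝ) ^ U.card :=
        sum_prod_le_pow_card_of_eqOn_compl_imp_eq _ hq0 (fun i => by simp) hq_le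
          fun σ hσ τ hτ hout => eq_of_sum_mul_sign_eq (fun i hi => hT0 i (hUT hi)) hsep hout
            ((Finset.mem_filter.1 hσ).2.trans (Finset.mem_filter.1 hτ).2.symm)
    _ ≤ (2/3 : ℝ) ^ ⌈(T.card : ℝ)/2⌉₊ := by
        refine pow_le_pow_of_le_one (by norm_num) (by norm_num) (Nat.ceil_le.2 ?_)
        rw [div_le_iff₀ two_pos]
        exact_mod_cast (by omega : T.card ≤ U.card * 2)

/-- If `v` has at least `S` magnitudes, and `w ∈ {±1}^n` is a random vector with independent
entries where `w i = 1` with probability `p i ∈ [1/3, 2/3]`, then for any `α`,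
`Pr[⟨v, w⟩ = α] ≤ (2/3)^⌈S/2⌉`. The probability is written explicitly as a sum over all
outcomes `σ : Fin n → Bool` (where `σ i = true` encodes `w i = 1`), weighted by the product
of the marginal probabilities (which is the joint distribution, by independence). -/
theorem stmt_2 (n S : ℕ) (hS : 0 < S) (v : Fin n → ℝ)
    (hmag : ∃ T : Finset (Fin n), T.card = S ∧ (∀ i ∈ T, v i ≠ 0) ∧
      Set.InjOn (fun i => mag (v i)) (T : Set (Fin n)))
    (p : Fin n → ℝ) (hp : ∀ i, 1/3 ≤ p i ∧ p i ≤ 2/3) (α : ℝ) :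
    ∑ σ : Fin n → Bool,
      (if (∑ i, v i * (if σ i then 1 else -1)) = α then
        ∏ i, (if σ i then p i else 1 - p i) else 0)
      ≤ (2/3 : ℝ) ^ ⌈(S : ℝ)/2⌉₊ :=
  stmt_2_general n S v hmag p hp α
end

section
/- Let h_1, ..., h_k be hyperplanes in ℝ^n forming an essential cover of the hypercube {±1}^n, where h_i = {x ∈ ℝ^n : ⟨v_i, x⟩ = μ_i}. Then |supp(v_i)| ≤ 2k for every i ∈ [k]. -/
/-!
Fix `i` and a vertex `x` lying on `h i` only. Flipping a nonempty set of coordinates `j` with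
`v i j * x j > 0` strictly decreases `⟨v i, ·⟩`, so the subcube through `x` in those directions
meets `h i` only at `x`. The other `k - 1` hyperplanes therefore cover that subcube except `x`,
and by the Alon–Füredi degree argument they are at least as many as its dimension. The same holds
for the coordinates with `v i j * x j < 0`, whence `#(supp (v i)) ≤ 2 (k - 1)`.
-/

/-- `IsEssentialCover n v μ` : the hyperplanes `h i = {x : ⟨v i, x⟩ = μ i}` form an essential
cover of the hypercube `{±1}^n`:
(E1) every vertex is covered; (E2) every coordinate appears with nonzero coefficient in some
hyperplane equation; (E3) every hyperplane covers a vertex not covered by any other. -/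
def IsEssentialCover {ι : Type*} (n : ℕ) (v : ι → Fin n → ℝ) (μ : ι → ℝ) : Prop :=
  (∀ x : Fin n → ℝ, (∀ j, x j = 1 ∨ x j = -1) → ∃ i, ∑ j, v i j * x j = μ i) ∧
  (∀ j : Fin n, ∃ i, v i j ≠ 0) ∧
  (∀ i, ∃ x : Fin n → ℝ, (∀ j, x j = 1 ∨ x j = -1) ∧ (∑ j, v i j * x j = μ i) ∧
    ∀ i', i' ≠ i → ∑ j, v i' j * x j ≠ μ i')

open Finset

section Subcube

variable {ι : Type*} [Fintype ι] [DecidableEq ι]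

noncomputable def subcube (Q : Finset ι) (x₀ : ι → ℝ) : Finset (ι → ℝ) :=
  Fintype.piFinset fun j => if j ∈ Q then {1, -1} else {x₀ j}

variable {Q : Finset ι} {x₀ y : ι → ℝ}

lemma mem_subcube :
    y ∈ subcube Q x₀ ↔ ∀ j, if j ∈ Q then y j = 1 ∨ y j = -1 else y j = x₀ j := by
  simp only [subcube, Fintype.mem_piFinset]
  refine forall_congr' fun j => ?_
  split_ifs <;> simp

lemma mul_self_eq_one_of_mem_subcube (hy : y ∈ subcube Q x₀) {j : ι} (hj : j ∈ Q) :
    y j * y j = 1 := by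
  have := mem_subcube.mp hy j
  rw [if_pos hj] at this
  rcases this with h | h <;> simp [h]

lemma eq_of_mem_subcube (hy : y ∈ subcube Q x₀) {j : ι} (hj : j ∉ Q) : y j = x₀ j := by
  simpa [hj] using mem_subcube.mp hy j

lemma sum_subcube_prod_eq_zero {A : Finset ι} (hAQ : A ⊆ Q) (hA : A.Nonempty) :
    ∑ y ∈ subcube Q x₀, ∏ j ∈ A, y j = 0 := by
  obtain ⟨a, ha⟩ := hA
  calc ∑ y ∈ subcube Q x₀, ∏ j ∈ A, y j
      = ∑ y ∈ subcube Q x₀, ∏ j, if j ∈ A then y j else 1 := by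
        simp only [prod_ite_mem, univ_inter]
    _ = ∏ j, ∑ b ∈ (if j ∈ Q then {1, -1} else {x₀ j}), if j ∈ A then b else 1 :=
        (prod_univ_sum (fun j => if j ∈ Q then {1, -1} else {x₀ j})
          fun j b => if j ∈ A then b else 1).symm
    _ = 0 := prod_eq_zero (mem_univ a) (by norm_num [ha, hAQ ha])

/-- Multiplying by an affine function raises the Fourier degree by at most one: on the subcube,
`y j * ∏ i ∈ A, y i` is the character of `A ∆ {j}` when `j ∈ Q`, and `x₀ j` times that of `A`
otherwise. -/
lemma sum_subcube_affine_mul_eq_zero (f : (ι → ℝ) → ℝ) (d : ℕ)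
    (hf : ∀ A ⊆ Q, d < #A → ∑ y ∈ subcube Q x₀, f y * ∏ j ∈ A, y j = 0)
    (w : ι → ℝ) (c : ℝ) :
    ∀ A ⊆ Q, d + 1 < #A →
      ∑ y ∈ subcube Q x₀, (∑ j, w j * y j - c) * f y * ∏ j ∈ A, y j = 0 := by
  intro A hAQ hA
  have hcoord : ∀ j, ∑ y ∈ subcube Q x₀, f y * (y j * ∏ i ∈ A, y i) = 0 := by
    intro j
    by_cases hjQ : j ∈ Q
    · by_cases hjA : j ∈ A
      · rw [← hf (A.erase j) ((erase_subset j A).trans hAQ)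
          (by rw [card_erase_of_mem hjA]; omega)]
        refine sum_congr rfl fun y hy => ?_
        rw [← mul_prod_erase A _ hjA, ← mul_assoc (y j),
          mul_self_eq_one_of_mem_subcube hy hjQ, one_mul]
      · rw [← hf (insert j A) (insert_subset hjQ hAQ)
          (by rw [card_insert_of_notMem hjA]; omega)]
        exact sum_congr rfl fun y _ => by rw [prod_insert hjA]
    · calc ∑ y ∈ subcube Q x₀, f y * (y j * ∏ i ∈ A, y i)
          = x₀ j * ∑ y ∈ subcube Q x₀, f y * ∏ i ∈ A, y i := by
            rw [mul_sum]
            refine sum_congr rfl fun y hy => ?_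
            rw [eq_of_mem_subcube hy hjQ]
            ring
        _ = 0 := by rw [hf A hAQ (by omega), mul_zero]
  calc ∑ y ∈ subcube Q x₀, (∑ j, w j * y j - c) * f y * ∏ j ∈ A, y j
      = ∑ j, w j * ∑ y ∈ subcube Q x₀, f y * (y j * ∏ i ∈ A, y i)
          - c * ∑ y ∈ subcube Q x₀, f y * ∏ i ∈ A, y i := by
        simp only [mul_sum, sum_mul, sub_mul, sum_sub_distrib]
        rw [sum_comm]
        congr 1 <;> refine sum_congr rfl fun _ _ => ?_
        · exact sum_congr rfl fun _ _ => by ring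
        · ring
    _ = 0 := by simp [hcoord, hf A hAQ (by omega)]

lemma sum_subcube_prod_affine_mul_prod_eq_zero {τ : Type*} (w : τ → ι → ℝ) (ν : τ → ℝ)
    (s : Finset τ) :
    ∀ A ⊆ Q, #s < #A →
      ∑ y ∈ subcube Q x₀, (∏ t ∈ s, (∑ j, w t j * y j - ν t)) * ∏ j ∈ A, y j = 0 := by
  classical
  induction s using Finset.induction_on with
  | empty =>
    intro A hAQ hA
    simpa using sum_subcube_prod_eq_zero hAQ (card_pos.mp hA)
  | insert a s ha ih =>
    intro A hAQ hA
    simp only [prod_insert ha]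
    simpa only [mul_assoc] using
      sum_subcube_affine_mul_eq_zero _ #s ih (w a) (ν a) A hAQ
        (by rwa [card_insert_of_notMem ha] at hA)

/-- Alon–Füredi, one missing vertex: the product of the equations has degree `#s`, yet pairs
nontrivially with the top character `∏ j ∈ Q, y j`. -/
theorem card_le_card_of_covers_subcube_but_one {τ : Type*} (w : τ → ι → ℝ) (ν : τ → ℝ)
    (s : Finset τ) (hx₀ : ∀ j ∈ Q, x₀ j = 1 ∨ x₀ j = -1)
    (hmiss : ∀ t ∈ s, ∑ j, w t j * x₀ j ≠ ν t)
    (hcover : ∀ y ∈ subcube Q x₀, y ≠ x₀ → ∃ t ∈ s, ∑ j, w t j * y j = ν t) :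
    #Q ≤ #s := by
  by_contra! hlt
  have hx₀mem : x₀ ∈ subcube Q x₀ := mem_subcube.mpr fun j => by
    split_ifs with hj
    exacts [hx₀ j hj, rfl]
  have hsum := sum_subcube_prod_affine_mul_prod_eq_zero (x₀ := x₀) w ν s Q subset_rfl hlt
  rw [sum_eq_single_of_mem x₀ hx₀mem fun y hy hne => by
    obtain ⟨t, ht, hyt⟩ := hcover y hy hne
    rw [prod_eq_zero ht (sub_eq_zero.mpr hyt), zero_mul]] at hsum
  refine mul_ne_zero (prod_ne_zero_iff.mpr fun t ht => sub_ne_zero.mpr (hmiss t ht))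
    (prod_ne_zero_iff.mpr fun j hj => ?_) hsum
  rcases hx₀ j hj with h | h <;> simp [h]

lemma sum_mul_lt_of_mem_subcube {w : ι → ℝ} (hx₀ : ∀ j ∈ Q, x₀ j = 1 ∨ x₀ j = -1)
    (hpos : ∀ j ∈ Q, 0 < w j * x₀ j) (hy : y ∈ subcube Q x₀) (hne : y ≠ x₀) :
    ∑ j, w j * y j < ∑ j, w j * x₀ j := by
  have hflip : ∀ j ∈ Q, y j = x₀ j ∨ y j = -x₀ j := fun j hj => by
    have := mem_subcube.mp hy j
    rw [if_pos hj] at this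
    rcases this with h | h <;> rcases hx₀ j hj with h' | h' <;> simp [h, h']
  have hle : ∀ j, w j * y j ≤ w j * x₀ j := fun j => by
    by_cases hj : j ∈ Q
    · rcases hflip j hj with h | h
      · rw [h]
      · linarith [hpos j hj, show w j * y j = -(w j * x₀ j) by rw [h, mul_neg]]
    · rw [eq_of_mem_subcube hy hj]
  obtain ⟨j, hj⟩ := Function.ne_iff.mp hne
  have hjQ : j ∈ Q := by
    by_contra hjQ
    exact hj (eq_of_mem_subcube hy hjQ)
  refine sum_lt_sum (fun j _ => hle j) ⟨j, mem_univ j, ?_⟩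
  have h : y j = -x₀ j := (hflip j hjQ).resolve_left hj
  linarith [hpos j hjQ, show w j * y j = -(w j * x₀ j) by rw [h, mul_neg]]

end Subcube

/-- The hyperplanes other than `h i` cover every vertex of the subcube except `x`. -/
lemma IsEssentialCover.card_le_of_avoids_subcube {n k : ℕ} {v : Fin k → Fin n → ℝ}
    {μ : Fin k → ℝ} (hcover : IsEssentialCover n v μ) {i : Fin k} {x : Fin n → ℝ}
    (hx : ∀ j, x j = 1 ∨ x j = -1) (hpriv : ∀ i', i' ≠ i → ∑ j, v i' j * x j ≠ μ i')
    {Q : Finset (Fin n)} (havoid : ∀ y ∈ subcube Q x, y ≠ x → ∑ j, v i j * y j ≠ μ i) :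
    #Q ≤ k - 1 := by
  have hcard : #(univ.erase i) = k - 1 := by rw [card_erase_of_mem (mem_univ i), card_fin]
  rw [← hcard]
  refine card_le_card_of_covers_subcube_but_one v μ _ (fun j _ => hx j)
    (fun t ht => hpriv t (ne_of_mem_erase ht)) fun y hy hne => ?_
  have hycube : ∀ j, y j = 1 ∨ y j = -1 := fun j => by
    have := mem_subcube.mp hy j
    split_ifs at this with hj
    exacts [this, this ▸ hx j]
  obtain ⟨t, ht⟩ := hcover.1 y hycube
  exact ⟨t, mem_erase.mpr ⟨fun h => havoid y hy hne (h ▸ ht), mem_univ t⟩, ht⟩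

theorem stmt_5_general (n k : ℕ) (v : Fin k → Fin n → ℝ) (μ : Fin k → ℝ)
    (hcover : IsEssentialCover n v μ) :
    ∀ i, (Finset.univ.filter (fun j => v i j ≠ 0)).card ≤ 2 * k := by
  intro i
  obtain ⟨x, hx, hxi, hpriv⟩ := hcover.2.2 i
  set P := univ.filter fun j => 0 < v i j * x j
  set N := univ.filter fun j => 0 < -v i j * x j
  have hP : #P ≤ k - 1 := hcover.card_le_of_avoids_subcube hx hpriv fun y hy hne =>
    (sum_mul_lt_of_mem_subcube (fun j _ => hx j) (fun j hj => (mem_filter.mp hj).2) hy hne).ne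
      |>.trans_eq hxi
  have hN : #N ≤ k - 1 := hcover.card_le_of_avoids_subcube hx hpriv fun y hy hne => by
    have := sum_mul_lt_of_mem_subcube (fun j _ => hx j) (fun j hj => (mem_filter.mp hj).2) hy hne
    simp only [neg_mul, sum_neg_distrib, neg_lt_neg_iff] at this
    exact (hxi ▸ this).ne'
  have hsupp : univ.filter (fun j => v i j ≠ 0) ⊆ P ∪ N := fun j hj => by
    have hxj : x j ≠ 0 := by rcases hx j with h | h <;> simp [h]
    have := mul_ne_zero (mem_filter.mp hj).2 hxj
    simp only [P, N, mem_union, mem_filter, mem_univ, true_and, neg_mul, neg_pos]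
    exact this.lt_or_gt.symm
  have hk : 0 < k := i.pos
  calc #(univ.filter fun j => v i j ≠ 0) ≤ #(P ∪ N) := card_le_card hsupp
    _ ≤ #P + #N := card_union_le P N
    _ ≤ 2 * k := by omega

/-- Linial–Radhakrishnan: in an essential cover of `{±1}^n` by `k` hyperplanes, every
hyperplane equation has at most `2k` nonzero coefficients. -/
theorem stmt_5 (n k : ℕ) (v : Fin k → Fin n → ℝ) (μ : Fin k → ℝ)
    (hne : ∀ i, v i ≠ 0)
    (hcover : IsEssentialCover n v μ) :
    ∀ i, (Finset.univ.filter (fun j => v i j ≠ 0)).card ≤ 2 * k :=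
  stmt_5_general n k v μ hcover
end

section
/- Let V ∈ ℝ^{ℓ×m} be a matrix with rows v_1, ..., v_ℓ, each of ℓ2-norm 1, and columns v_{*1}, ..., v_{*m}. Let θ ≥ 0 be a real satisfying θ·‖v_{*j}‖_1 ≤ 1/3 for all j ∈ [m]. Then for any μ ∈ ℝ^ℓ there exists y ∈ ℝ^m with ‖y‖_∞ ≤ 1/3 and |⟨v_i, y⟩ − μ_i| ≥ θ for all i ∈ [ℓ]. -/
/-!
Bang's lemma is proved directly: a sign vector `ε` maximising `θ²⟨ε, Mε⟩ - 2θ⟨ε, μ⟩` cannot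
gain by flipping its `i`-th sign, and since `M` is symmetric with `Mᵢᵢ = 1` this says exactly
`εᵢ((M(θε))ᵢ - μᵢ) ≥ θ`. The theorem applies it to `M = VVᵀ`, whose diagonal is the squared row
norms, with `y = θVᵀε`; then `⟨vᵢ, y⟩ = (M(θε))ᵢ` and `|y_j| ≤ θ‖v_{*j}‖₁ ≤ 1/3`.
-/

open Matrix

section

variable {ι : Type*} [Fintype ι] [DecidableEq ι]

theorem Matrix.IsSymm.dotProduct_mulVec_add_single {M : Matrix ι ι ℝ} (hM : M.IsSymm)
    (v : ι → ℝ) (i : ι) (a : ℝ) :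
    (v + Pi.single i a) ⬝ᵥ M *ᵥ (v + Pi.single i a) =
      v ⬝ᵥ M *ᵥ v + 2 * a * (M *ᵥ v) i + a ^ 2 * M i i := by
  have hcross : v ⬝ᵥ M *ᵥ Pi.single i a = a * (M *ᵥ v) i := by
    rw [dotProduct_mulVec, dotProduct_single, ← mulVec_transpose, hM.eq, mul_comm]
  simp only [mulVec_add, add_dotProduct, dotProduct_add, single_dotProduct, hcross]
  simp only [mulVec_single, col, Pi.smul_apply, transpose_apply, MulOpposite.smul_eq_mul_unop,
    MulOpposite.unop_op]
  ring

theorem bang_lemma (M : Matrix ι ι ℝ) (hM : M.IsSymm) (hdiag : ∀ i, M i i = 1)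
    (μ : ι → ℝ) (θ : ℝ) :
    ∃ ε : ι → ℝ, (∀ i, |ε i| = 1) ∧ ∀ i, θ ≤ |(M *ᵥ (θ • ε)) i - μ i| := by
  rcases le_or_gt θ 0 with hθ | hθ
  · exact ⟨1, by simp, fun i => hθ.trans (abs_nonneg _)⟩
  set S := Fintype.piFinset fun _ : ι => ({1, -1} : Finset ℝ)
  have hS : ∀ ε, ε ∈ S ↔ ∀ i, |ε i| = 1 := by
    intro ε
    simp [S, Fintype.mem_piFinset, abs_eq zero_le_one]
  obtain ⟨ε, hεS, hmax⟩ := S.exists_max_image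
    (fun ε => θ ^ 2 * (ε ⬝ᵥ M *ᵥ ε) - 2 * θ * (ε ⬝ᵥ μ)) ⟨1, (hS 1).2 (by simp)⟩
  have hε := (hS ε).1 hεS
  refine ⟨ε, hε, fun i => ?_⟩
  have hflip : ε + Pi.single i (-2 * ε i) ∈ S := by
    refine (hS _).2 fun j => ?_
    rcases eq_or_ne j i with rfl | hj
    · simp only [Pi.add_apply, Pi.single_eq_same]
      rw [show ε j + -2 * ε j = -ε j by ring, abs_neg, hε]
    · simp [Pi.single_eq_of_ne hj, hε]
  have hle := hmax _ hflip
  simp only [hM.dotProduct_mulVec_add_single, add_dotProduct, single_dotProduct, hdiag] at hle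
  have hsq : ε i ^ 2 = 1 := by rw [← sq_abs, hε, one_pow]
  have key : θ ≤ ε i * ((M *ᵥ (θ • ε)) i - μ i) := by
    rw [mulVec_smul, Pi.smul_apply, smul_eq_mul]
    nlinarith
  calc θ ≤ ε i * ((M *ᵥ (θ • ε)) i - μ i) := key
    _ ≤ |ε i * ((M *ᵥ (θ • ε)) i - μ i)| := le_abs_self _
    _ = |(M *ᵥ (θ • ε)) i - μ i| := by rw [abs_mul, hε, one_mul]

end

theorem abs_transpose_mulVec_le {ι κ : Type*} [Fintype ι] (A : Matrix ι κ ℝ) {ε : ι → ℝ}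
    (hε : ∀ i, |ε i| ≤ 1) (j : κ) : |(Aᵀ *ᵥ ε) j| ≤ ∑ i, |A i j| := by
  calc |(Aᵀ *ᵥ ε) j| = |∑ i, A i j * ε i| := rfl
    _ ≤ ∑ i, |A i j * ε i| := Finset.abs_sum_le_sum_abs _ _
    _ ≤ ∑ i, |A i j| := Finset.sum_le_sum fun i _ => by
        rw [abs_mul]; exact mul_le_of_le_one_right (abs_nonneg _) (hε i)

/-- Corollary of Bang's lemma: if `V ∈ ℝ^{ℓ×m}` has rows `v i` of ℓ2-norm 1 and `θ ≥ 0`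
satisfies `θ‖v_{*j}‖₁ ≤ 1/3` for every column `j`, then for any `μ ∈ ℝ^ℓ` there is a point
`y` with `‖y‖_∞ ≤ 1/3` and `|⟨v i, y⟩ - μ i| ≥ θ` for all `i`. -/
theorem stmt_8 (l m : ℕ) (V : Fin l → Fin m → ℝ)
    (hrow : ∀ i, Real.sqrt (∑ j, (V i j) ^ 2) = 1)
    (θ : ℝ) (hθ : 0 ≤ θ)
    (hcol : ∀ j : Fin m, θ * (∑ i, |V i j|) ≤ 1/3)
    (μ : Fin l → ℝ) :
    ∃ y : Fin m → ℝ, (∀ j, |y j| ≤ 1/3) ∧ ∀ i, θ ≤ |(∑ j, V i j * y j) - μ i| := by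
  set A := Matrix.of V
  have hdiag : ∀ i, (A * Aᵀ) i i = 1 := fun i => by
    simpa [A, mul_apply, sq] using Real.sqrt_eq_one.mp (hrow i)
  obtain ⟨ε, hε, hgap⟩ := bang_lemma (A * Aᵀ)
    (by rw [IsSymm, transpose_mul, transpose_transpose]) hdiag μ θ
  refine ⟨Aᵀ *ᵥ (θ • ε), fun j => ?_, fun i => ?_⟩
  · calc |(Aᵀ *ᵥ (θ • ε)) j| = θ * |(Aᵀ *ᵥ ε) j| := by
          rw [mulVec_smul, Pi.smul_apply, smul_eq_mul, abs_mul, abs_of_nonneg hθ]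
      _ ≤ θ * ∑ i, |V i j| :=
          mul_le_mul_of_nonneg_left (abs_transpose_mulVec_le A (fun i => (hε i).le) j) hθ
      _ ≤ 1 / 3 := hcol j
  · rw [← mulVec_mulVec] at hgap
    exact hgap i
end

section
/- Let h_1, ..., h_k with h_i = {x ∈ ℝ^n : ⟨v_i, x⟩ = μ_i} be an essential cover of {±1}^n, let K_1 ⊊ [k], and let N_1, N_2 partition [n] such that v_i restricted to N_1 is the zero vector for every i ∈ K_1. Then there exists w̃ ∈ {±1}^{N_2} such that every w ∈ {±1}^n with w restricted to N_2 equal to w̃ satisfies ⟨v_i, w⟩ ≠ μ_i for all i ∈ K_1. -/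
theorem IsEssentialCover.exists_vertex_forall_mem_ne {ι : Type*} {n : ℕ} {v : ι → Fin n → ℝ}
    {μ : ι → ℝ} (hcover : IsEssentialCover n v μ) {K : Set ι} {i₀ : ι} (hi₀ : i₀ ∉ K) :
    ∃ x : Fin n → ℝ, (∀ j, x j = 1 ∨ x j = -1) ∧ ∀ i ∈ K, ∑ j, v i j * x j ≠ μ i := by
  obtain ⟨x, hx, -, hunique⟩ := hcover.2.2 i₀
  exact ⟨x, hx, fun i hi => hunique i (ne_of_mem_of_not_mem hi hi₀)⟩

theorem Finset.sum_mul_congr_of_forall_eq_or_eq_zero {α R : Type*} [NonUnitalNonAssocSemiring R]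
    (s : Finset α) {a x y : α → R} (h : ∀ j ∈ s, x j = y j ∨ a j = 0) :
    ∑ j ∈ s, a j * x j = ∑ j ∈ s, a j * y j := by
  refine Finset.sum_congr rfl fun j hj => ?_
  rcases h j hj with hxy | ha
  · rw [hxy]
  · rw [ha, zero_mul, zero_mul]

theorem stmt_17_general (n k : ℕ) (v : Fin k → Fin n → ℝ) (μ : Fin k → ℝ)
    (hcover : IsEssentialCover n v μ)
    (K₁ : Finset (Fin k)) (hK₁ : K₁ ≠ Finset.univ)
    (N₁ N₂ : Finset (Fin n)) (hunion : N₁ ∪ N₂ = Finset.univ)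
    (hzero : ∀ i ∈ K₁, ∀ j ∈ N₁, v i j = 0) :
    ∃ wt : Fin n → ℝ, (∀ j ∈ N₂, wt j = 1 ∨ wt j = -1) ∧
      ∀ w : Fin n → ℝ, (∀ j, w j = 1 ∨ w j = -1) → (∀ j ∈ N₂, w j = wt j) →
        ∀ i ∈ K₁, ∑ j, v i j * w j ≠ μ i := by
  obtain ⟨i₀, -, hi₀⟩ := Finset.exists_of_ssubset (Finset.ssubset_univ_iff.mpr hK₁)
  obtain ⟨x, hx, hxK₁⟩ :=
    hcover.exists_vertex_forall_mem_ne (K := (K₁ : Set (Fin k))) (Finset.mem_coe.not.mpr hi₀)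
  refine ⟨x, fun j _ => hx j, fun w _ hwx i hi => ?_⟩
  have hsum : ∑ j, v i j * w j = ∑ j, v i j * x j := by
    refine Finset.sum_mul_congr_of_forall_eq_or_eq_zero _ fun j _ => ?_
    rcases Finset.mem_union.mp (hunion ▸ Finset.mem_univ j) with hj | hj
    · exact Or.inr (hzero i hi j hj)
    · exact Or.inl (hwx j hj)
  exact hsum ▸ hxK₁ i hi

/-- If `h_1, ..., h_k` is an essential cover of `{±1}^n`, `K₁ ⊊ [k]`, and `N₁ ⊔ N₂ = [n]` is a
partition such that `v i` vanishes on `N₁` for all `i ∈ K₁`, then there is an assignment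
`wt ∈ {±1}^{N₂}` such that any vertex `w ∈ {±1}^n` agreeing with `wt` on `N₂` avoids all the
hyperplanes `h i` with `i ∈ K₁`. -/
theorem stmt_17 (n k : ℕ) (v : Fin k → Fin n → ℝ) (μ : Fin k → ℝ)
    (hcover : IsEssentialCover n v μ)
    (K₁ : Finset (Fin k)) (hK₁ : K₁ ≠ Finset.univ)
    (N₁ N₂ : Finset (Fin n)) (hdisj : Disjoint N₁ N₂) (hunion : N₁ ∪ N₂ = Finset.univ)
    (hzero : ∀ i ∈ K₁, ∀ j ∈ N₁, v i j = 0) :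
    ∃ wt : Fin n → ℝ, (∀ j ∈ N₂, wt j = 1 ∨ wt j = -1) ∧
      ∀ w : Fin n → ℝ, (∀ j, w j = 1 ∨ w j = -1) → (∀ j ∈ N₂, w j = wt j) →
        ∀ i ∈ K₁, ∑ j, v i j * w j ≠ μ i :=
  stmt_17_general n k v μ hcover K₁ hK₁ N₁ N₂ hunion hzero
end
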